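/- arXiv:2510.06930 — 2 statements merged into one kernel-verified Lean document; each statement's English description precedes it below -/
import Mathlib

section
/- Let Σ be a d×d real symmetric positive definite matrix and b ∈ ℝ^d \ (−∞,0]^d. Let b̃ be the unique minimizer of xᵀ Σ^{-1} x over {x ≥ b} and τ = b̃ᵀ Σ^{-1} b̃ its minimal value. Then min over z ∈ [0,∞)^d with zᵀ b > 0 of (zᵀ Σ z)/(zᵀ b)² equals 1/τ. -/
open Matrix

/-- If `0 ≤ 2c + tq` for all small positive `t`, and `q ≥ 0`, then `c ≥ 0`. -/
lemma quad_aux {c q : ℝ} (hq : 0 ≤ q) {δ : ℝ} (hδ : 0 < δ)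
    (h : ∀ t : ℝ, 0 < t → t ≤ δ → 0 ≤ 2 * c + t * q) : 0 ≤ c := by
  by_contra hc
  push_neg at hc
  rcases eq_or_lt_of_le hq with hq0 | hq0
  · have := h δ hδ le_rfl
    nlinarith
  · have hcq : 0 < -c / q := div_pos (by linarith) hq0
    have ht : 0 < min δ (-c / q) := lt_min hδ hcq
    have h1 := h _ ht (min_le_left _ _)
    have h2 : min δ (-c / q) * q ≤ (-c / q) * q :=
      mul_le_mul_of_nonneg_right (min_le_right _ _) hq0.le
    rw [div_mul_cancel₀ _ hq0.ne'] at h2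
    nlinarith

lemma sym_dot {d : ℕ} {A : Matrix (Fin d) (Fin d) ℝ} (hA : Aᵀ = A)
    (u v : Fin d → ℝ) : u ⬝ᵥ A.mulVec v = v ⬝ᵥ A.mulVec u := by
  rw [Matrix.dotProduct_mulVec, ← Matrix.mulVec_transpose, hA, dotProduct_comm]

lemma expand_dot {d : ℕ} {A : Matrix (Fin d) (Fin d) ℝ} (hA : Aᵀ = A)
    (u v : Fin d → ℝ) (t : ℝ) :
    (u + t • v) ⬝ᵥ A.mulVec (u + t • v) =
      u ⬝ᵥ A.mulVec u + 2 * t * (u ⬝ᵥ A.mulVec v) + t ^ 2 * (v ⬝ᵥ A.mulVec v) := by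
  have hs := sym_dot hA v u
  simp only [Matrix.mulVec_add, Matrix.mulVec_smul, dotProduct_add,
    add_dotProduct, dotProduct_smul, smul_dotProduct, smul_eq_mul]
  linear_combination (t - t * t + t ^ 2 - t) * hs + t * hs

theorem stmt5 {d : ℕ} (S : Matrix (Fin d) (Fin d) ℝ) (hS : S.PosDef)
    (b : Fin d → ℝ) (hb : ∃ i, 0 < b i)
    (xt : Fin d → ℝ) (hxt_feas : ∀ i, b i ≤ xt i)
    (hxt_min : ∀ x : Fin d → ℝ, (∀ i, b i ≤ x i) →
      xt ⬝ᵥ S⁻¹.mulVec xt ≤ x ⬝ᵥ S⁻¹.mulVec x)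
    (τ : ℝ) (hτ : τ = xt ⬝ᵥ S⁻¹.mulVec xt) :
    IsLeast {r : ℝ | ∃ z : Fin d → ℝ, (∀ i, 0 ≤ z i) ∧ 0 < z ⬝ᵥ b ∧
      r = (z ⬝ᵥ S.mulVec z) / (z ⬝ᵥ b) ^ 2} (1 / τ) := by
  have hdet : IsUnit S.det := isUnit_iff_ne_zero.2 hS.det_pos.ne'
  have hSA : S * S⁻¹ = 1 := Matrix.mul_nonsing_inv S hdet
  have hApd : (S⁻¹).PosDef := hS.inv
  have hAsym : (S⁻¹)ᵀ = S⁻¹ := by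
    have := hApd.1
    rwa [Matrix.IsHermitian, Matrix.conjTranspose_eq_transpose_of_trivial] at this
  have hSsym : Sᵀ = S := by
    have := hS.1
    rwa [Matrix.IsHermitian, Matrix.conjTranspose_eq_transpose_of_trivial] at this
  -- τ > 0
  obtain ⟨i0, hi0⟩ := hb
  have hxt0 : xt ≠ 0 := by
    intro h
    have := hxt_feas i0
    rw [h] at this
    simp at this
    linarith
  have hτpos : 0 < τ := by
    rw [hτ]
    simpa using hApd.dotProduct_mulVec_pos hxt0
  -- variational inequality: for any direction v with xt + t•v feasible for small t,
  -- xt ⬝ᵥ A v ≥ 0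
  have hvar : ∀ (v : Fin d → ℝ) (δ : ℝ), 0 < δ →
      (∀ t : ℝ, 0 < t → t ≤ δ → ∀ i, b i ≤ xt i + t * v i) →
      0 ≤ xt ⬝ᵥ S⁻¹.mulVec v := by
    intro v δ hδ hfeas
    apply quad_aux (q := v ⬝ᵥ S⁻¹.mulVec v) (by simpa using hApd.posSemidef.dotProduct_mulVec_nonneg v) hδ
    intro t ht htδ
    have hmin := hxt_min (xt + t • v) (by
      intro i
      simpa [smul_eq_mul] using hfeas t ht htδ i)
    rw [expand_dot hAsym] at hmin
    nlinarith
  set ℵ : Fin d → ℝ := S⁻¹.mulVec xt with hℵ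
  -- ℵ is nonnegative
  have hℵnn : ∀ i, 0 ≤ ℵ i := by
    intro i
    have := hvar (Pi.single i 1) 1 one_pos (by
      intro t ht ht1 j
      rcases eq_or_ne j i with rfl | hji
      · simp only [Pi.single_eq_same]
        have := hxt_feas j; nlinarith
      · simp only [Pi.single_eq_of_ne hji, mul_zero, add_zero]
        exact hxt_feas j)
    rwa [sym_dot hAsym, single_dotProduct, one_mul] at this
  -- complementary slackness: ℵ i * b i = ℵ i * xt i
  have hcs : ∀ i, ℵ i * b i = ℵ i * xt i := by
    intro i
    rcases eq_or_lt_of_le (hxt_feas i) with heq | hlt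
    · rw [heq]
    · have h0 : 0 ≤ xt ⬝ᵥ S⁻¹.mulVec (-(Pi.single i 1)) := by
        apply hvar _ (xt i - b i) (by linarith)
        intro t ht htδ j
        rcases eq_or_ne j i with rfl | hji
        · simp only [Pi.neg_apply, Pi.single_eq_same]
          linarith
        · simp only [Pi.neg_apply, Pi.single_eq_of_ne hji, neg_zero, mul_zero, add_zero]
          exact hxt_feas j
      rw [sym_dot hAsym, neg_dotProduct, single_dotProduct, one_mul] at h0
      have : ℵ i = 0 := le_antisymm (by rw [hℵ]; linarith) (hℵnn i)
      rw [this]; ring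
  have hℵb : ℵ ⬝ᵥ b = τ := by
    have h1 : ℵ ⬝ᵥ b = ℵ ⬝ᵥ xt := by
      simp only [dotProduct]
      exact Finset.sum_congr rfl fun i _ => hcs i
    rw [h1, dotProduct_comm, hτ, hℵ]
  have hSℵ : S.mulVec ℵ = xt := by
    rw [hℵ, Matrix.mulVec_mulVec, hSA, Matrix.one_mulVec]
  have hℵSℵ : ℵ ⬝ᵥ S.mulVec ℵ = τ := by
    rw [hSℵ, dotProduct_comm, hτ, hℵ]
  constructor
  · -- membership: z = ℵ
    refine ⟨ℵ, hℵnn, by rw [hℵb]; exact hτpos, ?_⟩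
    rw [hℵSℵ, hℵb]
    field_simp
  · -- lower bound
    rintro r ⟨z, hz0, hzb, rfl⟩
    -- z ⬝ᵥ b ≤ z ⬝ᵥ xt
    have hzxt : z ⬝ᵥ b ≤ z ⬝ᵥ xt := by
      apply Finset.sum_le_sum
      intro i _
      exact mul_le_mul_of_nonneg_left (hxt_feas i) (hz0 i)
    -- Cauchy-Schwarz wrt S
    have hCS : (z ⬝ᵥ S.mulVec ℵ) ^ 2 ≤ (z ⬝ᵥ S.mulVec z) * (ℵ ⬝ᵥ S.mulVec ℵ) := by
      have hdisc := discrim_le_zero (a := ℵ ⬝ᵥ S.mulVec ℵ) (b := 2 * (z ⬝ᵥ S.mulVec ℵ))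
        (c := z ⬝ᵥ S.mulVec z) (fun t => by
          have := hS.posSemidef.dotProduct_mulVec_nonneg (z + t • ℵ)
          rw [star_trivial, expand_dot hSsym] at this
          nlinarith [this])
      rw [discrim] at hdisc
      nlinarith
    have hℵxt : ℵ ⬝ᵥ xt = τ := by rw [dotProduct_comm]; exact hτ.symm
    rw [hSℵ, hℵxt] at hCS
    have hzxt2 : (z ⬝ᵥ b) ^ 2 ≤ (z ⬝ᵥ xt) ^ 2 := by nlinarith
    rw [div_le_div_iff₀ hτpos (by positivity)]
    nlinarith
end

section
/- Let Σ be a d×d real symmetric positive definite matrix, b ∈ ℝ^d \ (−∞,0]^d, b̃ the unique solution of the quadratic program minimizing xᵀ Σ^{-1} x over {x ≥ b}. Then there exists a unique non-empty index set I ⊂ {1,…,d} such that: b̃_I = b_I; for J = {1,…,d} \ I (if non-empty) b̃_J = Σ_{JI} (Σ_{II})^{-1} b_I ≥ b_J; the vector ℵ = Σ^{-1} b̃ satisfies ℵ_I = (Σ_{II})^{-1} b_I > 0 (componentwise) and ℵ_J = 0; and the minimal value equals b_Iᵀ (Σ_{II})^{-1} b_I > 0. -/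
open Matrix

lemma ext_sum {d : ℕ} (I : Finset (Fin d)) (x : I → ℝ) (f : Fin d → ℝ) :
    ∑ j : Fin d, (if h : j ∈ I then x ⟨j, h⟩ else 0) * f j = ∑ i : I, x i * f i := by
  calc ∑ j : Fin d, (if h : j ∈ I then x ⟨j, h⟩ else 0) * f j
      = ∑ j ∈ I, (if h : j ∈ I then x ⟨j, h⟩ else 0) * f j :=
        (Finset.sum_subset I.subset_univ (fun j _ hj => by simp [dif_neg hj])).symm
    _ = ∑ i ∈ I.attach, (if h : (i : Fin d) ∈ I then x ⟨i, h⟩ else 0) * f i :=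
        (Finset.sum_attach I _).symm
    _ = ∑ i : I, x i * f i := Finset.sum_congr rfl (fun i _ => by simp [dif_pos i.2])

lemma quad_expand {d : ℕ} (A : Matrix (Fin d) (Fin d) ℝ) (hA : Aᵀ = A)
    (x : Fin d → ℝ) (t : ℝ) (i : Fin d) :
    (x + t • (Pi.single i 1 : Fin d → ℝ)) ⬝ᵥ A.mulVec (x + t • (Pi.single i 1 : Fin d → ℝ))
      = x ⬝ᵥ A.mulVec x + 2*t*(A.mulVec x i) + t^2 * A i i := by
  have h1 : A.mulVec (Pi.single i 1 : Fin d → ℝ) = fun j => A j i := by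
    funext j; simp [Matrix.mulVec_single]
  have h2 : x ⬝ᵥ (fun j => A j i) = A.mulVec x i := by
    simp only [Matrix.mulVec, dotProduct]
    exact Finset.sum_congr rfl fun j _ => by
      conv_rhs => rw [← hA]
      simp [Matrix.transpose_apply, mul_comm]
  rw [Matrix.mulVec_add, Matrix.mulVec_smul, dotProduct_add, add_dotProduct, add_dotProduct,
    dotProduct_smul, smul_dotProduct, smul_dotProduct, h1, h2]
  simp only [single_dotProduct, smul_eq_mul, one_mul, Pi.smul_apply]
  ring

/-- The principal submatrix of `S` with rows and columns in the index set `I`. -/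
def subMat {d : ℕ} (S : Matrix (Fin d) (Fin d) ℝ) (I : Finset (Fin d)) :
    Matrix I I ℝ :=
  S.submatrix (fun a : I => (a : Fin d)) (fun a : I => (a : Fin d))

/-- The vector `(Σ_{II})⁻¹ b_I`. -/
noncomputable def subSol {d : ℕ} (S : Matrix (Fin d) (Fin d) ℝ) (b : Fin d → ℝ)
    (I : Finset (Fin d)) : I → ℝ :=
  (subMat S I)⁻¹.mulVec fun a : I => b a

lemma subMat_posDef {d : ℕ} {S : Matrix (Fin d) (Fin d) ℝ} (hS : S.PosDef)
    (I : Finset (Fin d)) : (subMat S I).PosDef := by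
  refine Matrix.PosDef.of_dotProduct_mulVec_pos ?_ ?_
  · have hH : Sᴴ = S := hS.1
    show (subMat S I)ᴴ = subMat S I
    unfold subMat
    rw [Matrix.conjTranspose_submatrix, hH]
  · intro x hx
    set y : Fin d → ℝ := fun j => if h : j ∈ I then x ⟨j, h⟩ else 0 with hy
    have hy0 : y ≠ 0 := by
      intro h
      apply hx
      funext i
      have := congrFun h (i : Fin d)
      simpa [hy, dif_pos i.2] using this
    have key : (star x) ⬝ᵥ (subMat S I).mulVec x = (star y) ⬝ᵥ S.mulVec y := by
      have hsx : star x = x := by funext i; simp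
      have hsy : star y = y := by funext i; simp
      rw [hsx, hsy]
      have hmv : ∀ j : Fin d, (S.mulVec y) j = ∑ i : I, S j i * x i := by
        intro j
        show (fun k => S j k) ⬝ᵥ y = _
        simp only [dotProduct]
        calc ∑ k, S j k * y k = ∑ k : Fin d, (if h : k ∈ I then x ⟨k, h⟩ else 0) * S j k := by
              exact Finset.sum_congr rfl fun k _ => by rw [mul_comm]
          _ = ∑ i : I, x i * S j i := ext_sum I x (fun k => S j k)
          _ = ∑ i : I, S j i * x i := Finset.sum_congr rfl fun i _ => by rw [mul_comm]
      calc x ⬝ᵥ (subMat S I).mulVec x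
          = ∑ i : I, x i * ((subMat S I).mulVec x) i := rfl
        _ = ∑ i : I, x i * (S.mulVec y) i := by
            refine Finset.sum_congr rfl fun i _ => ?_
            rw [hmv]
            rfl
        _ = ∑ j : Fin d, (if h : j ∈ I then x ⟨j, h⟩ else 0) * (S.mulVec y) j :=
            (ext_sum I x (S.mulVec y)).symm
        _ = y ⬝ᵥ S.mulVec y := rfl
    rw [key]
    exact hS.dotProduct_mulVec_pos hy0

theorem stmt6 {d : ℕ} (S : Matrix (Fin d) (Fin d) ℝ) (hS : S.PosDef)
    (b : Fin d → ℝ) (hb : ∃ i, 0 < b i)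
    (xt : Fin d → ℝ) (hfeas : ∀ i, b i ≤ xt i)
    (hmin : ∀ x : Fin d → ℝ, (∀ i, b i ≤ x i) →
      xt ⬝ᵥ S⁻¹.mulVec xt ≤ x ⬝ᵥ S⁻¹.mulVec x) :
    ∃! I : Finset (Fin d), I.Nonempty ∧
      (∀ i : I, xt i = b i) ∧
      (∀ j : Fin d, j ∉ I →
        xt j = ∑ i : I, S j i * subSol S b I i ∧ b j ≤ xt j) ∧
      (∀ i : I, S⁻¹.mulVec xt i = subSol S b I i ∧ 0 < S⁻¹.mulVec xt i) ∧
      (∀ j : Fin d, j ∉ I → S⁻¹.mulVec xt j = 0) ∧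
      xt ⬝ᵥ S⁻¹.mulVec xt = (fun a : I => b a) ⬝ᵥ subSol S b I ∧
      0 < xt ⬝ᵥ S⁻¹.mulVec xt := by
  have hAinv : (S⁻¹).PosDef := hS.inv
  have hAsym : (S⁻¹)ᵀ = S⁻¹ := by
    rw [← Matrix.conjTranspose_eq_transpose_of_trivial]; exact hAinv.1
  set al : Fin d → ℝ := S⁻¹.mulVec xt with hal
  -- diagonal positivity of S⁻¹
  have hdiag : ∀ i, 0 < S⁻¹ i i := by
    intro i
    have h := hAinv.dotProduct_mulVec_pos (x := Pi.single i 1) (by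
      intro h; have := congrFun h i; simp at this)
    simpa [Matrix.mulVec_single, single_dotProduct] using h
  -- perturbation inequality
  have hpert : ∀ (t : ℝ) (i : Fin d), b i ≤ xt i + t →
      0 ≤ 2*t*(al i) + t^2 * S⁻¹ i i := by
    intro t i hti
    have hfeas' : ∀ j, b j ≤ (xt + t • (Pi.single i 1 : Fin d → ℝ)) j := by
      intro j
      by_cases hji : j = i
      · subst hji; simpa using hti
      · simpa [Pi.single_eq_of_ne hji] using hfeas j
    have := hmin _ hfeas'
    rw [quad_expand S⁻¹ hAsym xt t i] at this
    linarith
  -- Fact A : al ≥ 0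
  have hA : ∀ i, 0 ≤ al i := by
    intro i
    by_contra h
    push_neg at h
    have hc := hdiag i
    set t : ℝ := -al i / S⁻¹ i i with ht
    have htpos : 0 < t := div_pos (by linarith) hc
    have := hpert t i (by nlinarith [hfeas i])
    have htc : t * S⁻¹ i i = -al i := by
      rw [ht]; exact div_mul_cancel₀ _ hc.ne'
    have ht2 : t^2 * S⁻¹ i i = -(t * al i) := by
      rw [pow_two, mul_assoc, htc]; ring
    have : 0 ≤ t * al i := by linarith
    have := mul_neg_of_pos_of_neg htpos h
    linarith
  -- Fact B : complementarity
  have hB : ∀ i, b i < xt i → al i = 0 := by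
    intro i hi
    refine le_antisymm ?_ (hA i)
    by_contra h
    push_neg at h
    have hc := hdiag i
    set t : ℝ := -min (xt i - b i) (al i / S⁻¹ i i) with ht
    have hm1 : 0 < min (xt i - b i) (al i / S⁻¹ i i) :=
      lt_min (by linarith) (div_pos h hc)
    have hfe : b i ≤ xt i + t := by
      have := min_le_left (xt i - b i) (al i / S⁻¹ i i)
      simp only [ht]; linarith
    have hp := hpert t i hfe
    have hm2 : min (xt i - b i) (al i / S⁻¹ i i) ≤ al i / S⁻¹ i i := min_le_right _ _
    have hm3 : min (xt i - b i) (al i / S⁻¹ i i) * S⁻¹ i i ≤ al i := by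
      rw [← le_div_iff₀ hc] at *; exact hm2
    nlinarith [sq_nonneg t]
  -- Fact C
  have hC : S.mulVec al = xt := by
    rw [hal, Matrix.mulVec_mulVec, Matrix.mul_nonsing_inv S hS.det_pos.ne'.isUnit,
      Matrix.one_mulVec]
  classical
  set I : Finset (Fin d) := Finset.univ.filter (fun i => 0 < al i) with hI
  have hmem : ∀ i, i ∈ I ↔ 0 < al i := by intro i; simp [hI]
  have hoff : ∀ j, j ∉ I → al j = 0 := fun j hj =>
    le_antisymm (le_of_not_gt fun h => hj ((hmem j).mpr h)) (hA j)
  have hon : ∀ i ∈ I, xt i = b i := by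
    intro i hi
    by_contra h
    have hlt : b i < xt i := lt_of_le_of_ne (hfeas i) (Ne.symm h)
    have h0 := (hmem i).mp hi
    rw [hB i hlt] at h0
    exact lt_irrefl 0 h0
  have hrow : ∀ j, xt j = ∑ i : I, S j i * al i := by
    intro j
    conv_lhs => rw [← hC]
    calc (S.mulVec al) j = ∑ k, S j k * al k := by
          simp [Matrix.mulVec, dotProduct]
      _ = ∑ k : Fin d, (if h : k ∈ I then al k else 0) * S j k := by
          refine Finset.sum_congr rfl fun k _ => ?_
          by_cases hk : k ∈ I
          · simp [hk, mul_comm]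
          · simp [hk, hoff k hk]
      _ = ∑ i : I, al i * S j i := ext_sum I (fun i => al i) _
      _ = ∑ i : I, S j i * al i := Finset.sum_congr rfl fun i _ => mul_comm _ _
  have hP := subMat_posDef hS I
  have hdet : IsUnit (subMat S I).det := hP.det_pos.ne'.isUnit
  have hsubvec : (subMat S I).mulVec (fun i : I => al i) = fun i : I => b i := by
    funext i
    have h1 : ((subMat S I).mulVec (fun i : I => al i)) i = ∑ i' : I, S i i' * al i' := by
      simp [subMat, Matrix.mulVec, dotProduct, Matrix.submatrix_apply]
    rw [h1, ← hrow i, hon i i.2]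
  have hsolEq : subSol S b I = fun i : I => al i := by
    show (subMat S I)⁻¹.mulVec (fun a : I => b a) = _
    rw [← hsubvec, Matrix.mulVec_mulVec, Matrix.nonsing_inv_mul _ hdet, Matrix.one_mulVec]
  have hne : I.Nonempty := by
    rw [Finset.nonempty_iff_ne_empty]
    intro h
    have hz : al = 0 := funext fun j => hoff j (by simp [h])
    have hx0 : xt = 0 := by rw [← hC, hz, Matrix.mulVec_zero]
    obtain ⟨i, hbi⟩ := hb
    have := hfeas i
    rw [hx0] at this
    simp at this
    linarith
  have hxt0 : xt ≠ 0 := by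
    intro h
    obtain ⟨i, hbi⟩ := hb
    have := hfeas i
    rw [h] at this
    simp at this
    linarith
  have hvpos : 0 < xt ⬝ᵥ al := by
    have h := hAinv.dotProduct_mulVec_pos hxt0
    have hsx : star xt = xt := by funext i; simp
    rwa [hsx] at h
  have hval : xt ⬝ᵥ al = (fun a : I => b a) ⬝ᵥ subSol S b I := by
    rw [hsolEq]
    show ∑ j, xt j * al j = ∑ i : I, b i * al i
    calc ∑ j, xt j * al j
        = ∑ j : Fin d, (if h : j ∈ I then b j else 0) * al j := by
          refine Finset.sum_congr rfl fun j _ => ?_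
          by_cases hj : j ∈ I
          · simp [hj, hon j hj]
          · simp [hj, hoff j hj]
      _ = ∑ i : I, b i * al i := ext_sum I (fun i : I => b i) al
  refine ⟨I, ⟨hne, fun i => hon i i.2, fun j hj => ⟨by rw [hsolEq]; exact hrow j, hfeas j⟩,
    fun i => ⟨by rw [hsolEq], (hmem i).mp i.2⟩, hoff, hval, hvpos⟩, ?_⟩
  rintro J ⟨hJne, hJon, hJoff, hJ4, hJ5, hJ6, hJ7⟩
  ext i
  rw [hmem i]
  constructor
  · intro h
    exact (hJ4 ⟨i, h⟩).2
  · intro h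
    by_contra hni
    rw [hJ5 i hni] at h
    exact lt_irrefl 0 h
end
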